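/- arXiv:2601.02120 — 9 statements merged into one kernel-verified Lean document; each statement's English description precedes it below -/
import Mathlib

section
/- Every k-maximal ideal M of a commutative semiring S is prime: M is proper, and for all a, b ∈ S, a·b ∈ M implies a ∈ M or b ∈ M. -/
/-- An ideal `I` of a commutative semiring is *subtractive* (a `k`-ideal) if
`x + y ∈ I` and `y ∈ I` imply `x ∈ I`. -/
def Ideal.IsSubtractive {S : Type*} [CommSemiring S] (I : Ideal S) : Prop :=
  ∀ x y : S, x + y ∈ I → y ∈ I → x ∈ I

/-- Every `k`-maximal ideal of a commutative semiring is prime: a proper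
subtractive ideal maximal among proper subtractive ideals is proper and
satisfies `a·b ∈ M → a ∈ M ∨ b ∈ M`. -/
theorem kMaximal_is_prime {S : Type*} [CommSemiring S] (M : Ideal S)
    (hMsub : M.IsSubtractive) (hMproper : M ≠ ⊤)
    (hMmax : ∀ Q : Ideal S, Q.IsSubtractive → Q ≠ ⊤ → M ≤ Q → Q = M) :
    M ≠ ⊤ ∧ ∀ a b : S, a * b ∈ M → a ∈ M ∨ b ∈ M := by
  refine ⟨hMproper, fun a b hab => ?_⟩
  by_cases ha : a ∈ M
  · exact Or.inl ha
  · right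
    set Q : Ideal S :=
      { carrier := {x | x * b ∈ M}
        add_mem' := fun {x y} hx hy => by
          simp only [Set.mem_setOf_eq] at *
          rw [add_mul]; exact M.add_mem hx hy
        zero_mem' := by simp
        smul_mem' := fun c x hx => by
          simp only [Set.mem_setOf_eq, smul_eq_mul] at *
          rw [mul_assoc]; exact M.mul_mem_left c hx } with hQ
    have hQsub : Q.IsSubtractive := by
      intro x y hxy hy
      exact hMsub (x * b) (y * b) (by rw [← add_mul]; exact hxy) hy
    have hMQ : M ≤ Q := fun m hm => M.mul_mem_right b hm
    have haQ : a ∈ Q := hab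
    have hQtop : Q = ⊤ := by
      by_contra hne
      exact ha (hMmax Q hQsub hne hMQ ▸ haQ)
    have h1 : (1 : S) ∈ Q := hQtop ▸ Submodule.mem_top
    have : (1 : S) * b ∈ M := h1
    simpa using this
end

section
/- Let S be a commutative semiring, let T be a multiplicatively closed subset of S containing 1, and let I be a subtractive ideal of S disjoint from T that is maximal among subtractive ideals disjoint from T (i.e., every subtractive ideal strictly containing I meets T). Then I is prime: I is proper, and for all a, b ∈ S, a·b ∈ I implies a ∈ I or b ∈ I. -/
/-- The subtractive closure of `I + (a)` as an ideal. -/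
def subclosure {S : Type*} [CommSemiring S] (I : Ideal S) (a : S) : Ideal S where
  carrier := {x | ∃ i1 ∈ I, ∃ i2 ∈ I, ∃ s1 s2 : S, x + i1 + s1 * a = i2 + s2 * a}
  zero_mem' := ⟨0, I.zero_mem, 0, I.zero_mem, 0, 0, by ring⟩
  add_mem' := by
    rintro x y ⟨i1, h1, i2, h2, s1, s2, hx⟩ ⟨i3, h3, i4, h4, s3, s4, hy⟩
    refine ⟨i1 + i3, I.add_mem h1 h3, i2 + i4, I.add_mem h2 h4, s1 + s3, s2 + s4, ?_⟩
    calc x + y + (i1 + i3) + (s1 + s3) * a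
        = (x + i1 + s1 * a) + (y + i3 + s3 * a) := by ring
      _ = (i2 + s2 * a) + (i4 + s4 * a) := by rw [hx, hy]
      _ = i2 + i4 + (s2 + s4) * a := by ring
  smul_mem' := by
    rintro r x ⟨i1, h1, i2, h2, s1, s2, hx⟩
    refine ⟨r * i1, I.mul_mem_left r h1, r * i2, I.mul_mem_left r h2, r * s1, r * s2, ?_⟩
    calc r • x + r * i1 + r * s1 * a = r * (x + i1 + s1 * a) := by
          simp only [smul_eq_mul]; ring
      _ = r * (i2 + s2 * a) := by rw [hx]
      _ = r * i2 + r * s2 * a := by ring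

theorem subclosure_subtractive {S : Type*} [CommSemiring S] (I : Ideal S) (a : S) :
    (subclosure I a).IsSubtractive := by
  rintro x y ⟨i1, h1, i2, h2, s1, s2, hxy⟩ ⟨i3, h3, i4, h4, s3, s4, hy⟩
  refine ⟨i1 + i4, I.add_mem h1 h4, i2 + i3, I.add_mem h2 h3, s1 + s4, s2 + s3, ?_⟩
  calc x + (i1 + i4) + (s1 + s4) * a
      = x + i1 + s1 * a + (i4 + s4 * a) := by ring
    _ = x + i1 + s1 * a + (y + i3 + s3 * a) := by rw [← hy]
    _ = (x + y + i1 + s1 * a) + (i3 + s3 * a) := by ring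
    _ = (i2 + s2 * a) + (i3 + s3 * a) := by rw [hxy]
    _ = i2 + i3 + (s2 + s3) * a := by ring

theorem le_subclosure {S : Type*} [CommSemiring S] (I : Ideal S) (a : S) :
    I ≤ subclosure I a := fun i hi => ⟨0, I.zero_mem, i, hi, 0, 0, by ring⟩

theorem mem_subclosure_self {S : Type*} [CommSemiring S] (I : Ideal S) (a : S) :
    a ∈ subclosure I a := ⟨0, I.zero_mem, 0, I.zero_mem, 0, 1, by ring⟩

/-- If `a*b ∈ I` and `I` is subtractive, then every element of the subtractive
closure of `I + (a)` multiplied by `b` lands in `I`. -/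
theorem subclosure_mul_mem {S : Type*} [CommSemiring S] {I : Ideal S}
    (hIsub : I.IsSubtractive) {a b x : S} (hab : a * b ∈ I)
    (hx : x ∈ subclosure I a) : x * b ∈ I := by
  obtain ⟨i1, h1, i2, h2, s1, s2, hx⟩ := hx
  apply hIsub (x * b) (i1 * b + s1 * (a * b))
  · have : x * b + (i1 * b + s1 * (a * b)) = i2 * b + s2 * (a * b) := by
      calc x * b + (i1 * b + s1 * (a * b)) = (x + i1 + s1 * a) * b := by ring
        _ = (i2 + s2 * a) * b := by rw [hx]
        _ = i2 * b + s2 * (a * b) := by ring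
    rw [this]
    exact I.add_mem (I.mul_mem_right b h2) (I.mul_mem_left s2 hab)
  · exact I.add_mem (I.mul_mem_right b h1) (I.mul_mem_left s1 hab)

/-- Subtractive analogue of Krull's theorem: if `T` is a multiplicatively closed
subset of `S` containing `1`, and `I` is a subtractive ideal disjoint from `T`
that is maximal among subtractive ideals disjoint from `T`, then `I` is prime. -/
theorem krull_subtractive {S : Type*} [CommSemiring S] (T : Submonoid S)
    (I : Ideal S) (hIsub : I.IsSubtractive)
    (hdisj : (I : Set S) ∩ (T : Set S) = ∅)
    (hmax : ∀ J : Ideal S, J.IsSubtractive → I < J → ∃ t ∈ J, t ∈ T) :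
    I ≠ ⊤ ∧ ∀ a b : S, a * b ∈ I → a ∈ I ∨ b ∈ I := by
  have hdisj' : ∀ x : S, x ∈ I → x ∈ T → False := by
    intro x hxI hxT
    exact Set.eq_empty_iff_forall_notMem.mp hdisj x ⟨hxI, hxT⟩
  constructor
  · intro h
    exact hdisj' 1 (h ▸ Submodule.mem_top) T.one_mem
  · intro a b hab
    by_contra h
    push_neg at h
    obtain ⟨ha, hb⟩ := h
    obtain ⟨ta, htaJ, htaT⟩ := hmax (subclosure I a) (subclosure_subtractive I a)
      (lt_of_le_of_ne (le_subclosure I a)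
        (fun he => ha (he ▸ mem_subclosure_self I a)))
    obtain ⟨tb, htbJ, htbT⟩ := hmax (subclosure I b) (subclosure_subtractive I b)
      (lt_of_le_of_ne (le_subclosure I b)
        (fun he => hb (he ▸ mem_subclosure_self I b)))
    -- ta * b ∈ I
    have htab : ta * b ∈ I := subclosure_mul_mem hIsub hab htaJ
    -- tb * ta ∈ I since ta * b ∈ I i.e. b * ta ∈ I
    have htba : tb * ta ∈ I :=
      subclosure_mul_mem hIsub (by rwa [mul_comm] at htab) htbJ
    exact hdisj' (tb * ta) htba (T.mul_mem htbT htaT)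
end

section
/- Let I be a subtractive ideal of a commutative semiring S. Then I is k-strongly irreducible if and only if for all a, b ∈ S, C_k(⟨a⟩) ∩ C_k(⟨b⟩) ⊆ I implies a ∈ I or b ∈ I. -/
/-- The `k`-closure of an ideal `J`: the set of all `s` with `s + x ∈ J` for
some `x ∈ J`; it is the smallest subtractive ideal containing `J`. -/
def Ideal.kClosure {S : Type*} [CommSemiring S] (J : Ideal S) : Ideal S where
  carrier := {s : S | ∃ x ∈ J, s + x ∈ J}
  zero_mem' := ⟨0, J.zero_mem, by simp⟩
  add_mem' := by
    rintro a b ⟨x, hx, hax⟩ ⟨y, hy, hby⟩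
    refine ⟨x + y, J.add_mem hx hy, ?_⟩
    have : a + b + (x + y) = (a + x) + (b + y) := by ring
    rw [this]
    exact J.add_mem hax hby
  smul_mem' := by
    rintro r a ⟨x, hx, hax⟩
    refine ⟨r * x, J.mul_mem_left r hx, ?_⟩
    have : r • a + r * x = r * (a + x) := by simp [smul_eq_mul]; ring
    rw [this]
    exact J.mul_mem_left r hax

lemma Ideal.le_kClosure {S : Type*} [CommSemiring S] (J : Ideal S) : J ≤ J.kClosure :=
  fun s hs => ⟨0, J.zero_mem, by simpa using hs⟩

lemma Ideal.kClosure_isSubtractive {S : Type*} [CommSemiring S] (J : Ideal S) :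
    J.kClosure.IsSubtractive := by
  rintro a b ⟨x, hx, h1⟩ ⟨y, hy, h2⟩
  refine ⟨b + y + x, J.add_mem h2 hx, ?_⟩
  have : a + (b + y + x) = (a + b + x) + y := by ring
  rw [this]
  exact J.add_mem h1 hy

lemma Ideal.kClosure_le {S : Type*} [CommSemiring S] {J A : Ideal S}
    (hA : A.IsSubtractive) (h : J ≤ A) : J.kClosure ≤ A := by
  rintro s ⟨x, hx, hsx⟩
  exact hA s x (h hsx) (h hx)

/-- A subtractive ideal `I` is `k`-strongly irreducible iff for all `a, b`,
`C_k(⟨a⟩) ∩ C_k(⟨b⟩) ⊆ I` implies `a ∈ I` or `b ∈ I`. -/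
theorem kStronglyIrreducible_iff_kClosure_principal {S : Type*} [CommSemiring S]
    (I : Ideal S) (hIsub : I.IsSubtractive) :
    (∀ A B : Ideal S, A.IsSubtractive → B.IsSubtractive → A ⊓ B ≤ I → A ≤ I ∨ B ≤ I) ↔
      (∀ a b : S,
        (Ideal.span {a}).kClosure ⊓ (Ideal.span {b}).kClosure ≤ I → a ∈ I ∨ b ∈ I) := by
  constructor
  · intro h a b hab
    have := h _ _ (Ideal.kClosure_isSubtractive _) (Ideal.kClosure_isSubtractive _) hab
    rcases this with h' | h'
    · exact Or.inl (h' (Ideal.le_kClosure _ (Ideal.subset_span rfl)))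
    · exact Or.inr (h' (Ideal.le_kClosure _ (Ideal.subset_span rfl)))
  · intro h A B hA hB hAB
    by_cases hAI : A ≤ I
    · exact Or.inl hAI
    · right
      obtain ⟨a, haA, haI⟩ := SetLike.not_le_iff_exists.mp hAI
      intro b hbB
      have hspa : (Ideal.span {a}).kClosure ≤ A :=
        Ideal.kClosure_le hA (Ideal.span_le.mpr (by simpa using haA))
      have hspb : (Ideal.span {b}).kClosure ≤ B :=
        Ideal.kClosure_le hB (Ideal.span_le.mpr (by simpa using hbB))
      have : (Ideal.span {a}).kClosure ⊓ (Ideal.span {b}).kClosure ≤ I :=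
        le_trans (inf_le_inf hspa hspb) hAB
      rcases h a b this with h' | h'
      · exact absurd h' haI
      · exact h'
end

section
/- Let φ : S → S' be a surjective homomorphism of commutative semirings (preserving 0, 1, addition and multiplication) such that whenever φ(a) = φ(b) ≠ 0 for a, b ∈ S, the principal ideals ⟨a⟩ and ⟨b⟩ of S coincide. If J is a k-strongly irreducible ideal of S', then the preimage φ⁻¹(J) is a k-strongly irreducible ideal of S. -/
/-- A subtractive ideal `I` is *`k`-strongly irreducible* if for all subtractive
ideals `A`, `B`, `A ∩ B ⊆ I` implies `A ⊆ I` or `B ⊆ I`. -/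
def Ideal.IsKStronglyIrreducible {S : Type*} [CommSemiring S] (I : Ideal S) : Prop :=
  I.IsSubtractive ∧
    ∀ A B : Ideal S, A.IsSubtractive → B.IsSubtractive → A ⊓ B ≤ I → A ≤ I ∨ B ≤ I

/-- The subtractive closure of the image of an ideal under a surjective hom. -/
def clImage {S S' : Type*} [CommSemiring S] [CommSemiring S'] (φ : S →+* S')
    (hsurj : Function.Surjective φ) (A : Ideal S) : Ideal S' where
  carrier := {u | ∃ a₁ ∈ A, ∃ a₂ ∈ A, u + φ a₁ = φ a₂}
  zero_mem' := ⟨0, A.zero_mem, 0, A.zero_mem, by simp⟩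
  add_mem' := by
    rintro u v ⟨a₁, ha₁, a₂, ha₂, h⟩ ⟨b₁, hb₁, b₂, hb₂, h'⟩
    refine ⟨a₁ + b₁, A.add_mem ha₁ hb₁, a₂ + b₂, A.add_mem ha₂ hb₂, ?_⟩
    simp only [map_add]
    rw [← h, ← h']; ring
  smul_mem' := by
    rintro r u ⟨a₁, ha₁, a₂, ha₂, h⟩
    obtain ⟨c, rfl⟩ := hsurj r
    refine ⟨c * a₁, A.mul_mem_left c ha₁, c * a₂, A.mul_mem_left c ha₂, ?_⟩
    simp only [map_mul, smul_eq_mul]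
    rw [← mul_add, h]

lemma mem_clImage {S S' : Type*} [CommSemiring S] [CommSemiring S'] {φ : S →+* S'}
    {hsurj : Function.Surjective φ} {A : Ideal S} {u : S'} :
    u ∈ clImage φ hsurj A ↔ ∃ a₁ ∈ A, ∃ a₂ ∈ A, u + φ a₁ = φ a₂ := Iff.rfl

lemma clImage_subtractive {S S' : Type*} [CommSemiring S] [CommSemiring S'] (φ : S →+* S')
    (hsurj : Function.Surjective φ) (A : Ideal S) :
    (clImage φ hsurj A).IsSubtractive := by
  rintro u v ⟨a₁, ha₁, a₂, ha₂, h⟩ ⟨b₁, hb₁, b₂, hb₂, h'⟩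
  refine ⟨a₁ + b₂, A.add_mem ha₁ hb₂, a₂ + b₁, A.add_mem ha₂ hb₁, ?_⟩
  simp only [map_add]
  calc u + (φ a₁ + φ b₂) = (u + (v + φ b₁)) + φ a₁ := by rw [← h']; ring
    _ = (u + v + φ a₁) + φ b₁ := by ring
    _ = φ a₂ + φ b₁ := by rw [h]

lemma mem_clImage_of_mem {S S' : Type*} [CommSemiring S] [CommSemiring S'] (φ : S →+* S')
    (hsurj : Function.Surjective φ) (A : Ideal S) {a : S} (ha : a ∈ A) :
    φ a ∈ clImage φ hsurj A :=
  ⟨0, A.zero_mem, a, ha, by simp⟩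

/-- If `φ : S → S'` is a surjective semiring homomorphism such that
`φ(a) = φ(b) ≠ 0` implies `⟨a⟩ = ⟨b⟩`, then the preimage of a `k`-strongly
irreducible ideal of `S'` is a `k`-strongly irreducible ideal of `S`. -/
theorem comap_kStronglyIrreducible {S S' : Type*} [CommSemiring S] [CommSemiring S']
    (φ : S →+* S') (hsurj : Function.Surjective φ)
    (hprin : ∀ a b : S, φ a = φ b → φ a ≠ 0 → Ideal.span {a} = Ideal.span {b})
    (J : Ideal S') (hJ : J.IsKStronglyIrreducible) :
    (J.comap φ).IsKStronglyIrreducible := by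
  obtain ⟨hJsub, hJirr⟩ := hJ
  have hspan : ∀ (Q : Ideal S) (a b : S), φ a = φ b → φ a ≠ 0 → b ∈ Q → a ∈ Q := by
    intro Q a b hab hne hb
    have h1 : Ideal.span {a} ≤ Q := by
      rw [hprin a b hab hne]
      exact (Ideal.span_singleton_le_iff_mem Q).mpr hb
    exact h1 (Ideal.mem_span_singleton_self a)
  constructor
  · intro x y hxy hy
    exact hJsub (φ x) (φ y) (by simpa using hxy) hy
  · intro A B hA hB hAB
    -- helper: if u + φ p = 0 with p ∈ P, u ∈ clImage Q, P ⊓ Q ≤ comap J, then u ∈ J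
    have L : ∀ (P Q : Ideal S), Q.IsSubtractive → P ⊓ Q ≤ Ideal.comap φ J →
        ∀ u : S', ∀ p ∈ P, u + φ p = 0 → u ∈ clImage φ hsurj Q → u ∈ J := by
      intro P Q hQ hPQ u p hp hup huQ
      have hw : φ p ∈ clImage φ hsurj Q := by
        refine clImage_subtractive φ hsurj Q (φ p) u ?_ huQ
        rw [add_comm, hup]; exact Ideal.zero_mem _
      obtain ⟨q₁, hq₁, q₂, hq₂, hq⟩ := hw
      have finish : p ∈ Q → u ∈ J := fun hpQ =>
        hJsub u (φ p) (by rw [hup]; exact J.zero_mem) (hPQ ⟨hp, hpQ⟩)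
      by_cases h2 : φ q₂ = 0
      · -- then φ q₁ = u
        have hq1u : φ q₁ = u := by
          calc φ q₁ = φ q₁ + (u + φ p) := by rw [hup, add_zero]
            _ = (φ p + φ q₁) + u := by ring
            _ = φ q₂ + u := by rw [hq]
            _ = u := by rw [h2, zero_add]
        by_cases hu0 : u = 0
        · rw [hu0]; exact J.zero_mem
        · apply finish
          have he : φ (q₁ + (p + q₁)) = φ q₁ := by
            simp only [map_add]
            calc φ q₁ + (φ p + φ q₁) = φ q₁ + φ q₂ := by rw [hq]
              _ = φ q₁ := by rw [h2, add_zero]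
          have hne : φ (q₁ + (p + q₁)) ≠ 0 := by rw [he, hq1u]; exact hu0
          have hmem : q₁ + (p + q₁) ∈ Q := hspan Q _ q₁ he hne hq₁
          have hmem' : p + (q₁ + q₁) ∈ Q := by
            have heq : q₁ + (p + q₁) = p + (q₁ + q₁) := by ring
            rwa [heq] at hmem
          exact hQ p (q₁ + q₁) hmem' (Q.add_mem hq₁ hq₁)
      · apply finish
        have he : φ (p + q₁) = φ q₂ := by simp only [map_add]; exact hq
        have hmem : p + q₁ ∈ Q := hspan Q _ q₂ he (by rw [he]; exact h2) hq₂
        exact hQ p q₁ hmem hq₁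
    -- main application
    have hinf : clImage φ hsurj A ⊓ clImage φ hsurj B ≤ J := by
      rintro u ⟨huA, huB⟩
      have huA' := huA
      have huB' := huB
      obtain ⟨a₁, ha₁, a₂, ha₂, ha⟩ := huA
      obtain ⟨b₁, hb₁, b₂, hb₂, hb⟩ := huB
      by_cases hA2 : φ a₂ = 0
      · exact L A B hB hAB u a₁ ha₁ (by rw [ha, hA2]) huB'
      · by_cases hB2 : φ b₂ = 0
        · exact L B A hA (by rw [inf_comm]; exact hAB) u b₁ hb₁ (by rw [hb, hB2]) huA'
        · obtain ⟨x, rfl⟩ := hsurj u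
          have hxA : x ∈ A := by
            have he : φ (x + a₁) = φ a₂ := by simp only [map_add]; exact ha
            have hmem : x + a₁ ∈ A := hspan A _ a₂ he (by rw [he]; exact hA2) ha₂
            exact hA x a₁ hmem ha₁
          have hxB : x ∈ B := by
            have he : φ (x + b₁) = φ b₂ := by simp only [map_add]; exact hb
            have hmem : x + b₁ ∈ B := hspan B _ b₂ he (by rw [he]; exact hB2) hb₂
            exact hB x b₁ hmem hb₁
          exact hAB ⟨hxA, hxB⟩
    rcases hJirr (clImage φ hsurj A) (clImage φ hsurj B)
        (clImage_subtractive φ hsurj A) (clImage_subtractive φ hsurj B) hinf with h | h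
    · exact Or.inl fun a ha => h (mem_clImage_of_mem φ hsurj A ha)
    · exact Or.inr fun b hb => h (mem_clImage_of_mem φ hsurj B hb)
end

section
/- Let S be a commutative semiring, T a submonoid of S, and L a localization of S at T with canonical map f : S → L. If J is a proper k-strongly irreducible ideal of L, then its contraction J^c = f⁻¹(J) is a proper k-strongly irreducible subtractive ideal of S that is disjoint from T. -/
/-- The extension of a subtractive ideal to a localization is subtractive. -/
lemma map_isSubtractive {S : Type*} [CommSemiring S]
    (T : Submonoid S) (L : Type*) [CommSemiring L] [Algebra S L] [IsLocalization T L]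
    (A : Ideal S) (hA : A.IsSubtractive) :
    (A.map (algebraMap S L)).IsSubtractive := by
  intro x y hxy hy
  obtain ⟨⟨⟨b, hb⟩, s⟩, hbs⟩ := (IsLocalization.mem_map_algebraMap_iff T L).1 hxy
  obtain ⟨⟨⟨c, hc⟩, u⟩, hcu⟩ := (IsLocalization.mem_map_algebraMap_iff T L).1 hy
  obtain ⟨⟨a, t⟩, hat⟩ := IsLocalization.surj T x
  simp only at hbs hcu hat
  have key : algebraMap S L (a * (s * u) + c * (t * s)) = algebraMap S L (b * (t * u)) := by
    rw [map_add, map_mul, map_mul, map_mul, map_mul, map_mul, map_mul, ← hat, ← hcu, ← hbs]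
    ring
  obtain ⟨v, hv⟩ := (IsLocalization.eq_iff_exists T L).1 key
  have h1 : (v : S) * (a * (s * u)) + (v : S) * (c * (t * s)) ∈ A := by
    rw [← mul_add, hv]
    exact A.mul_mem_left _ (A.mul_mem_right _ hb)
  have h2 : (v : S) * (c * (t * s)) ∈ A := A.mul_mem_left _ (A.mul_mem_right _ hc)
  have h3 : (v : S) * (a * (s * u)) ∈ A := hA _ _ h1 h2
  refine (IsLocalization.mem_map_algebraMap_iff T L).2
    ⟨⟨⟨(v : S) * (a * (s * u)), h3⟩, v * (t * (s * u))⟩, ?_⟩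
  push_cast [map_mul]
  rw [show x * (algebraMap S L v * (algebraMap S L t * (algebraMap S L s * algebraMap S L u)))
      = x * algebraMap S L t * (algebraMap S L v * (algebraMap S L s * algebraMap S L u))
      by ring, hat]
  ring

/-- If `J` is a proper `k`-strongly irreducible ideal of a localization `L` of
`S` at a submonoid `T`, then its contraction along the canonical map is a proper
`k`-strongly irreducible subtractive ideal of `S` disjoint from `T`. -/
theorem comap_of_localization_kStronglyIrreducible {S : Type*} [CommSemiring S]
    (T : Submonoid S) (L : Type*) [CommSemiring L] [Algebra S L] [IsLocalization T L]
    (J : Ideal L) (hJproper : J ≠ ⊤) (hJ : J.IsKStronglyIrreducible) :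
    Ideal.comap (algebraMap S L) J ≠ ⊤ ∧
      (Ideal.comap (algebraMap S L) J).IsKStronglyIrreducible ∧
      (Ideal.comap (algebraMap S L) J : Set S) ∩ (T : Set S) = ∅ := by
  set f := algebraMap S L
  refine ⟨?_, ⟨?_, ?_⟩, ?_⟩
  · intro h
    apply hJproper
    rw [Ideal.eq_top_iff_one] at h ⊢
    simpa using (Ideal.mem_comap.1 h)
  · -- subtractive
    intro x y hxy hy
    exact hJ.1 (f x) (f y) (by simpa using hxy) hy
  · -- k-strongly irreducible
    intro A B hA hB hAB
    have hmapA := map_isSubtractive T L A hA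
    have hmapB := map_isSubtractive T L B hB
    have hint : A.map f ⊓ B.map f ≤ J := by
      intro z ⟨hzA, hzB⟩
      obtain ⟨⟨⟨a, ha⟩, t⟩, hat⟩ := (IsLocalization.mem_map_algebraMap_iff T L).1 hzA
      obtain ⟨⟨⟨b, hb⟩, s⟩, hbs⟩ := (IsLocalization.mem_map_algebraMap_iff T L).1 hzB
      simp only at hat hbs
      have key : f (a * s) = f (b * t) := by
        rw [map_mul, map_mul, ← hat, ← hbs]; ring
      obtain ⟨v, hv⟩ := (IsLocalization.eq_iff_exists T L).1 key
      have hmemA : (v : S) * (a * s) ∈ A ⊓ B := by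
        constructor
        · exact A.mul_mem_left _ (A.mul_mem_right _ ha)
        · rw [hv]; exact B.mul_mem_left _ (B.mul_mem_right _ hb)
      have := hAB hmemA
      -- z * f (v * (t * s)) = f (v * (a * s)) ∈ J, and f(v*(t*s)) is a unit
      have hz : z * f ((v : S) * ((t : S) * s)) = f ((v : S) * (a * s)) := by
        push_cast [map_mul]
        rw [show z * (f v * (f t * f s)) = z * f t * (f v * f s) by ring, hat]
        ring
      have hu : IsUnit (f ((v : S) * ((t : S) * s))) := by
        have : ((v : S) * ((t : S) * s)) ∈ T := T.mul_mem v.2 (T.mul_mem t.2 s.2)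
        exact IsLocalization.map_units L ⟨_, this⟩
      have hmemJ : z * f ((v : S) * ((t : S) * s)) ∈ J := hz ▸ Ideal.mem_comap.1 this
      obtain ⟨w, hw⟩ := hu.exists_right_inv
      have : z * (f ((v : S) * ((t : S) * s)) * w) ∈ J := by
        rw [← mul_assoc]; exact J.mul_mem_right _ hmemJ
      rwa [hw, mul_one] at this
    rcases hJ.2 (A.map f) (B.map f) hmapA hmapB hint with h | h
    · exact Or.inl (le_trans Ideal.le_comap_map (Ideal.comap_mono h))
    · exact Or.inr (le_trans Ideal.le_comap_map (Ideal.comap_mono h))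
  · -- disjoint from T
    ext x
    simp only [Set.mem_inter_iff, Set.mem_empty_iff_false, iff_false, not_and]
    intro hxJ hxT
    exact hJproper (Ideal.eq_top_of_isUnit_mem J (Ideal.mem_comap.1 hxJ)
      (IsLocalization.map_units L ⟨x, hxT⟩))
end

section
/- Let S be a commutative semiring, T a submonoid of S, and L a localization of S at T with canonical map f : S → L. Let I be a proper k-strongly irreducible subtractive ideal of S with I ∩ T = ∅ which is a contracted ideal, i.e., I = f⁻¹(T⁻¹I). Then the extension T⁻¹I is a proper k-strongly irreducible subtractive ideal of L. -/
private lemma mem_of_mul_unit {L : Type*} [CommSemiring L] {J : Ideal L} {z u : L}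
    (hu : IsUnit u) (h : z * u ∈ J) : z ∈ J := by
  obtain ⟨v, rfl⟩ := hu
  have := J.mul_mem_right (↑v⁻¹) h
  rwa [mul_assoc, Units.mul_inv, mul_one] at this

/-- If `I` is a proper `k`-strongly irreducible subtractive ideal of `S`,
disjoint from the submonoid `T` and contracted (`I = f⁻¹(T⁻¹I)`), then its
extension `T⁻¹I` to a localization `L` of `S` at `T` is a proper `k`-strongly
irreducible subtractive ideal of `L`. -/
theorem map_of_localization_kStronglyIrreducible {S : Type*} [CommSemiring S]
    (T : Submonoid S) (L : Type*) [CommSemiring L] [Algebra S L] [IsLocalization T L]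
    (I : Ideal S) (hIproper : I ≠ ⊤) (hI : I.IsKStronglyIrreducible)
    (hdisj : (I : Set S) ∩ (T : Set S) = ∅)
    (hcontr : I = Ideal.comap (algebraMap S L) (Ideal.map (algebraMap S L) I)) :
    Ideal.map (algebraMap S L) I ≠ ⊤ ∧
      (Ideal.map (algebraMap S L) I).IsKStronglyIrreducible := by
  set f := algebraMap S L with hf
  refine ⟨?_, ?_, ?_⟩
  · -- properness
    intro htop
    apply hIproper
    rw [hcontr, htop, Ideal.comap_top]
  · -- subtractive
    intro x y hxy hy
    rw [IsLocalization.mem_map_algebraMap_iff T L] at hxy hy ⊢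
    obtain ⟨⟨a, t⟩, ha⟩ := hxy
    obtain ⟨⟨b, u⟩, hb⟩ := hy
    obtain ⟨⟨s, w⟩, hs⟩ := IsLocalization.surj T x
    have key : f (s * t * u + (b : S) * (t * w)) = f ((a : S) * (u * w)) := by
      simp only [map_add, map_mul]
      rw [← hs, ← hb, ← ha]; ring
    rw [IsLocalization.eq_iff_exists T L] at key
    obtain ⟨c, hc⟩ := key
    have hmem : (c : S) * (s * t * u) + (c : S) * ((b : S) * (t * w)) ∈ I := by
      rw [← mul_add, hc]
      exact I.mul_mem_left _ (I.mul_mem_right _ a.2)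
    have hcs : (c : S) * (s * t * u) ∈ I :=
      hI.1 _ _ hmem (I.mul_mem_left _ (I.mul_mem_right _ b.2))
    refine ⟨⟨⟨(c : S) * (s * t * u), hcs⟩, c * t * u * w⟩, ?_⟩
    show x * f ((c : S) * t * u * w) = f ((c : S) * (s * t * u))
    simp only [map_mul]
    rw [← hs]; ring
  · -- k-strong irreducibility
    intro A B hA hB hAB
    have hA' : (Ideal.comap f A).IsSubtractive := fun x y hxy hy =>
      hA (f x) (f y) (by rw [← map_add]; exact hxy) hy
    have hB' : (Ideal.comap f B).IsSubtractive := fun x y hxy hy =>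
      hB (f x) (f y) (by rw [← map_add]; exact hxy) hy
    have hle : Ideal.comap f A ⊓ Ideal.comap f B ≤ I := by
      intro x hx
      rw [hcontr]
      exact hAB ⟨hx.1, hx.2⟩
    have key : ∀ (C : Ideal L), Ideal.comap f C ≤ I → C ≤ Ideal.map f I := by
      intro C hC z hz
      obtain ⟨⟨s, w⟩, hs⟩ := IsLocalization.surj T z
      have hsA : s ∈ Ideal.comap f C := by
        rw [Ideal.mem_comap, ← hs]
        exact C.mul_mem_right _ hz
      have : z * f w ∈ Ideal.map f I := by
        rw [hs]
        exact Ideal.mem_map_of_mem f (hC hsA)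
      exact mem_of_mul_unit (IsLocalization.map_units L w) this
    rcases hI.2 _ _ hA' hB' hle with h | h
    · exact Or.inl (key A h)
    · exact Or.inr (key B h)
end

section
/- Let S be a commutative semiring, T a submonoid of S, and L a localization of S at T with canonical map f : S → L. Let I be a k-primary ideal of S. Then: (1) the extension T⁻¹I is a subtractive ideal of L satisfying the primary condition: for all u, v ∈ L, u·v ∈ T⁻¹I implies u ∈ T⁻¹I or v^n ∈ T⁻¹I for some n ≥ 1; (2) if moreover R_k(I) ∩ T = ∅, then f⁻¹(T⁻¹I) = I. -/
/-- A *`k`-prime* ideal is a proper subtractive ideal `P` with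
`a·b ∈ P → a ∈ P ∨ b ∈ P`. -/
def Ideal.IsKPrime {S : Type*} [CommSemiring S] (P : Ideal S) : Prop :=
  P ≠ ⊤ ∧ P.IsSubtractive ∧ ∀ a b : S, a * b ∈ P → a ∈ P ∨ b ∈ P

/-- The *`k`-radical* of an ideal `I`: the intersection of all `k`-prime ideals
containing `I`. -/
def Ideal.kRadical {S : Type*} [CommSemiring S] (I : Ideal S) : Ideal S :=
  sInf {P : Ideal S | P.IsKPrime ∧ I ≤ P}

/-- A *`k`-primary* ideal is a subtractive ideal `I` with
`a·b ∈ I → a ∉ I → bⁿ ∈ I` for some `n ≥ 1`. -/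
def Ideal.IsKPrimary {S : Type*} [CommSemiring S] (I : Ideal S) : Prop :=
  I.IsSubtractive ∧ ∀ a b : S, a * b ∈ I → a ∉ I → ∃ n : ℕ, 1 ≤ n ∧ b ^ n ∈ I

lemma pow_mem_kPrime {S : Type*} [CommSemiring S] {P : Ideal S} (hP : P.IsKPrime)
    {x : S} {n : ℕ} (hn : 1 ≤ n) (h : x ^ n ∈ P) : x ∈ P := by
  induction n with
  | zero => omega
  | succ m ih =>
    rcases Nat.eq_or_lt_of_le (Nat.one_le_iff_ne_zero.mpr (by omega) : 1 ≤ m + 1) with h1 | h1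
    · simpa [← h1] using h
    · rw [pow_succ] at h
      rcases hP.2.2 _ _ h with h' | h'
      · exact ih (by omega) h'
      · exact h'

lemma pow_mem_kRadical {S : Type*} [CommSemiring S] {I : Ideal S}
    {x : S} {n : ℕ} (hn : 1 ≤ n) (h : x ^ n ∈ I) : x ∈ I.kRadical := by
  rw [Ideal.kRadical, Ideal.mem_sInf]
  rintro P ⟨hP, hIP⟩
  exact pow_mem_kPrime hP hn (hIP h)

/-- Localization of a `k`-primary ideal: (1) the extension `T⁻¹I` is subtractive
and satisfies the primary condition in `L`; (2) if `R_k(I) ∩ T = ∅`, then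
`f⁻¹(T⁻¹I) = I`. -/
theorem localization_kPrimary {S : Type*} [CommSemiring S]
    (T : Submonoid S) (L : Type*) [CommSemiring L] [Algebra S L] [IsLocalization T L]
    (I : Ideal S) (hI : I.IsKPrimary) :
    ((Ideal.map (algebraMap S L) I).IsSubtractive ∧
      ∀ u v : L, u * v ∈ Ideal.map (algebraMap S L) I →
        u ∈ Ideal.map (algebraMap S L) I ∨
          ∃ n : ℕ, 1 ≤ n ∧ v ^ n ∈ Ideal.map (algebraMap S L) I) ∧
    ((I.kRadical : Set S) ∩ (T : Set S) = ∅ →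
      Ideal.comap (algebraMap S L) (Ideal.map (algebraMap S L) I) = I) := by
  set f := algebraMap S L with hf
  have memiff : ∀ z : L, z ∈ Ideal.map f I ↔
      ∃ x : I × T, z * f x.2 = f x.1 :=
    fun z => IsLocalization.mem_map_algebraMap_iff T L
  refine ⟨⟨?_, ?_⟩, ?_⟩
  · -- subtractive
    intro u v huv hv
    rw [memiff] at huv hv ⊢
    obtain ⟨⟨⟨a1, ha1⟩, t1⟩, h1⟩ := huv
    obtain ⟨⟨⟨a2, ha2⟩, t2⟩, h2⟩ := hv
    obtain ⟨⟨s, t⟩, hs⟩ := IsLocalization.surj T u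
    replace h1 : (u + v) * f t1 = f a1 := h1
    replace h2 : v * f t2 = f a2 := h2
    replace hs : u * f t = f s := hs
    have key : f (s * (t1 * t2) + a2 * (t1 * t)) = f (a1 * (t2 * t)) := by
      simp only [map_add, map_mul]
      calc f s * (f t1 * f t2) + f a2 * (f t1 * f t)
          = (u * f t) * (f t1 * f t2) + (v * f t2) * (f t1 * f t) := by rw [hs, h2]
        _ = ((u + v) * f t1) * (f t2 * f t) := by ring
        _ = f a1 * (f t2 * f t) := by rw [h1]
    rw [IsLocalization.eq_iff_exists T] at key
    obtain ⟨c, hc⟩ := key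
    have hmem : (c : S) * (s * (t1 * t2)) ∈ I := by
      refine hI.1 _ ((c : S) * (a2 * ((t1 : S) * t))) ?_
        (I.mul_mem_left _ (I.mul_mem_right _ ha2))
      rw [← mul_add, hc]
      exact I.mul_mem_left _ (I.mul_mem_right _ ha1)
    refine ⟨⟨⟨_, hmem⟩, c * (t * (t1 * t2))⟩, ?_⟩
    show u * f ((c : S) * ((t : S) * ((t1 : S) * t2))) = f ((c : S) * (s * ((t1 : S) * t2)))
    simp only [map_mul]
    calc u * (f c * (f t * (f t1 * f t2)))
        = (u * f t) * (f c * (f t1 * f t2)) := by ring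
      _ = f s * (f c * (f t1 * f t2)) := by rw [hs]
      _ = f c * (f s * (f t1 * f t2)) := by ring
  · -- primary
    intro u v huv
    rw [memiff] at huv
    obtain ⟨⟨⟨i, hi⟩, t3⟩, h3⟩ := huv
    obtain ⟨⟨a, t1⟩, h1⟩ := IsLocalization.surj T u
    obtain ⟨⟨b, t2⟩, h2⟩ := IsLocalization.surj T v
    replace h3 : u * v * f t3 = f i := h3
    replace h1 : u * f t1 = f a := h1
    replace h2 : v * f t2 = f b := h2
    have key : f (a * b * t3) = f (i * (t1 * t2)) := by
      simp only [map_mul]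
      calc f a * f b * f t3
          = (u * f t1) * (v * f t2) * f t3 := by rw [h1, h2]
        _ = (u * v * f t3) * (f t1 * f t2) := by ring
        _ = f i * (f t1 * f t2) := by rw [h3]
    rw [IsLocalization.eq_iff_exists T] at key
    obtain ⟨c, hc⟩ := key
    have hab : ((c : S) * t3 * a) * b ∈ I := by
      rw [show ((c : S) * t3 * a) * b = (c : S) * (a * b * t3) by ring, hc]
      exact I.mul_mem_left _ (I.mul_mem_right _ hi)
    by_cases h : (c : S) * t3 * a ∈ I
    · left
      rw [memiff]
      refine ⟨⟨⟨_, h⟩, c * t3 * t1⟩, ?_⟩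
      show u * f ((c : S) * t3 * t1) = f ((c : S) * t3 * a)
      simp only [map_mul]
      calc u * (f c * f t3 * f t1)
          = (u * f t1) * (f c * f t3) := by ring
        _ = f a * (f c * f t3) := by rw [h1]
        _ = f c * f t3 * f a := by ring
    · obtain ⟨n, hn1, hn⟩ := hI.2 _ _ hab h
      right
      refine ⟨n, hn1, ?_⟩
      rw [memiff]
      refine ⟨⟨⟨_, hn⟩, t2 ^ n⟩, ?_⟩
      show v ^ n * f ((t2 : S) ^ n) = f (b ^ n)
      rw [map_pow, map_pow, ← mul_pow, h2]
  · -- part 2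
    intro hdisj
    refine le_antisymm ?_ Ideal.le_comap_map
    intro a ha
    rw [Ideal.mem_comap, memiff] at ha
    obtain ⟨⟨⟨i, hi⟩, t⟩, ht⟩ := ha
    replace ht : f a * f t = f i := ht
    rw [← map_mul, IsLocalization.eq_iff_exists T] at ht
    obtain ⟨c, hc⟩ := ht
    have hmem : a * ((c : S) * t) ∈ I := by
      rw [show a * ((c : S) * t) = (c : S) * (a * t) by ring, hc]
      exact I.mul_mem_left _ hi
    by_cases h : a ∈ I
    · exact h
    · obtain ⟨n, hn1, hn⟩ := hI.2 _ _ hmem h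
      exfalso
      have : (c : S) * t ∈ (I.kRadical : Set S) ∩ (T : Set S) :=
        ⟨pow_mem_kRadical hn1 hn, T.mul_mem c.2 t.2⟩
      rw [hdisj] at this
      exact this
end

section
/- Let S be a von Neumann regular commutative semiring, i.e., for every a ∈ S there exists x ∈ S with a = a²·x. Then a proper subtractive ideal I of S is k-strongly irreducible if and only if it is k-primary. -/
/-- The subtractive (k-)closure of an ideal. -/
def kcl {S : Type*} [CommSemiring S] (J : Ideal S) : Ideal S where
  carrier := {z | ∃ u ∈ J, z + u ∈ J}
  zero_mem' := ⟨0, J.zero_mem, by simpa using J.zero_mem⟩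
  add_mem' := by
    rintro a b ⟨u, hu, hau⟩ ⟨v, hv, hbv⟩
    exact ⟨u + v, J.add_mem hu hv, by
      rw [show a + b + (u + v) = (a + u) + (b + v) by ring]
      exact J.add_mem hau hbv⟩
  smul_mem' := by
    rintro c z ⟨u, hu, hzu⟩
    exact ⟨c * u, J.mul_mem_left c hu, by
      rw [smul_eq_mul, show c * z + c * u = c * (z + u) by ring]
      exact J.mul_mem_left c hzu⟩

lemma mem_kcl {S : Type*} [CommSemiring S] {J : Ideal S} {z : S} :
    z ∈ kcl J ↔ ∃ u ∈ J, z + u ∈ J := Iff.rfl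

lemma le_kcl {S : Type*} [CommSemiring S] (J : Ideal S) : J ≤ kcl J :=
  fun z hz => ⟨0, J.zero_mem, by simpa using hz⟩

lemma kcl_isSubtractive {S : Type*} [CommSemiring S] (J : Ideal S) :
    (kcl J).IsSubtractive := by
  rintro x y ⟨u, hu, hxyu⟩ ⟨v, hv, hyv⟩
  refine ⟨y + v + u, J.add_mem hyv hu, ?_⟩
  rw [show x + (y + v + u) = (x + y + u) + v by ring]
  exact J.add_mem hxyu hv

lemma vnr_pow {S : Type*} [CommSemiring S] {b x : S} (h : b = b ^ 2 * x) :
    ∀ n : ℕ, b = b ^ (n + 1) * x ^ n := by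
  intro n
  induction n with
  | zero => simp
  | succ n ih =>
    calc b = b ^ (n + 1) * x ^ n := ih
    _ = b ^ n * b * x ^ n := by ring
    _ = b ^ n * (b ^ 2 * x) * x ^ n := by rw [← h]
    _ = b ^ (n + 2) * x ^ (n + 1) := by ring

/-- In a von Neumann regular commutative semiring, a proper subtractive ideal is
`k`-strongly irreducible if and only if it is `k`-primary. -/
theorem vnr_kStronglyIrreducible_iff_kPrimary {S : Type*} [CommSemiring S]
    (hvnr : ∀ a : S, ∃ x : S, a = a ^ 2 * x)
    (I : Ideal S) (hIsub : I.IsSubtractive) (hIproper : I ≠ ⊤) :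
    (∀ A B : Ideal S, A.IsSubtractive → B.IsSubtractive → A ⊓ B ≤ I → A ≤ I ∨ B ≤ I) ↔
      (∀ a b : S, a * b ∈ I → a ∉ I → ∃ n : ℕ, 1 ≤ n ∧ b ^ n ∈ I) := by
  constructor
  · intro hirr a b hab haI
    set A₀ : Ideal S := I ⊔ Ideal.span {a} with hA₀
    set B₀ : Ideal S := I ⊔ Ideal.span {b} with hB₀
    -- key: products of A₀ and B₀ land in I
    have key : ∀ u ∈ A₀, ∀ v ∈ B₀, u * v ∈ I := by
      intro u hu v hv
      rw [hA₀, Submodule.mem_sup] at hu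
      rw [hB₀, Submodule.mem_sup] at hv
      obtain ⟨i, hi, p, hp, rfl⟩ := hu
      obtain ⟨j, hj, q, hq, rfl⟩ := hv
      rw [Ideal.mem_span_singleton'] at hp hq
      obtain ⟨c, rfl⟩ := hp
      obtain ⟨d, rfl⟩ := hq
      have : (i + c * a) * (j + d * b)
          = i * (j + d * b) + (c * a) * j + (c * d) * (a * b) := by ring
      rw [this]
      exact I.add_mem (I.add_mem (I.mul_mem_right _ hi) (I.mul_mem_left _ hj))
        (I.mul_mem_left _ hab)
    have hle : kcl A₀ ⊓ kcl B₀ ≤ I := by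
      rintro z ⟨hzA, hzB⟩
      obtain ⟨u, hu, hzu⟩ := hzA
      obtain ⟨v, hv, hzv⟩ := hzB
      obtain ⟨x, hx⟩ := hvnr z
      have hw : z * v + u * z + u * v ∈ I := by
        apply hIsub _ (u * v) _ (key u hu v hv)
        rw [show z * v + u * z + u * v + u * v = (z + u) * v + u * (z + v) by ring]
        exact I.add_mem (key _ hzu v hv) (key u hu _ hzv)
      have heq : z + (z * v + u * z + u * v) * x = (z + u) * (z + v) * x := by
        rw [show (z + u) * (z + v) * x
          = z ^ 2 * x + (z * v + u * z + u * v) * x by ring, ← hx]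
      apply hIsub z ((z * v + u * z + u * v) * x) _ (I.mul_mem_right x hw)
      rw [heq]
      exact I.mul_mem_right x (key _ hzu _ hzv)
    rcases hirr (kcl A₀) (kcl B₀) (kcl_isSubtractive _) (kcl_isSubtractive _) hle with h | h
    · exact absurd (h (le_kcl A₀ (le_sup_right.trans_eq hA₀.symm
        (Ideal.subset_span rfl)))) haI
    · refine ⟨1, le_refl 1, ?_⟩
      rw [pow_one]
      exact h (le_kcl B₀ ((le_sup_right : Ideal.span {b} ≤ B₀)
        (Ideal.subset_span rfl)))
  · intro hprim A B hA hB hAB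
    by_cases hAI : A ≤ I
    · exact Or.inl hAI
    · right
      rw [SetLike.not_le_iff_exists] at hAI
      obtain ⟨a, haA, haI⟩ := hAI
      intro b hb
      have hab : a * b ∈ I :=
        hAB ⟨A.mul_mem_right b haA, B.mul_mem_left a hb⟩
      obtain ⟨n, hn, hbn⟩ := hprim a b hab haI
      obtain ⟨x, hx⟩ := hvnr b
      obtain ⟨m, rfl⟩ := Nat.exists_eq_add_of_le hn
      have := vnr_pow hx m
      rw [add_comm 1 m] at hbn
      rw [this]
      exact I.mul_mem_right _ hbn
end

section
/- Let S be a principal ideal semidomain: a commutative semiring that is a semidomain in which every ideal is principal. Then every nonzero proper prime subtractive ideal P of S is k-maximal: for every subtractive ideal Q of S with P ⊆ Q, either Q = P or Q = S. -/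
/-- In a principal ideal semidomain, every nonzero proper prime subtractive
ideal is `k`-maximal. -/
theorem pisd_kPrime_is_kMaximal {S : Type*} [CommSemiring S] [IsDomain S]
    (hprinc : ∀ J : Ideal S, ∃ a : S, J = Ideal.span {a})
    (P : Ideal S) (hPne : P ≠ ⊥) (hPproper : P ≠ ⊤) (hPsub : P.IsSubtractive)
    (hPprime : ∀ a b : S, a * b ∈ P → a ∈ P ∨ b ∈ P) :
    ∀ Q : Ideal S, Q.IsSubtractive → P ≤ Q → Q = P ∨ Q = ⊤ := by
  intro Q hQsub hPQ
  obtain ⟨p, hp⟩ := hprinc P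
  obtain ⟨q, hq⟩ := hprinc Q
  have hp0 : p ≠ 0 := by
    rintro rfl
    exact hPne (by rw [hp, Ideal.span_singleton_eq_bot])
  have hpP : p ∈ P := hp ▸ Ideal.mem_span_singleton_self p
  have hpQ : p ∈ Q := hPQ hpP
  rw [hq, Ideal.mem_span_singleton] at hpQ
  obtain ⟨r, hr⟩ := hpQ
  have hqr : q * r ∈ P := hr ▸ hpP
  rcases hPprime q r hqr with hqP | hrP
  · left
    refine le_antisymm ?_ hPQ
    rw [hq]
    exact Ideal.span_le.mpr (by simpa using hqP)
  · right
    rw [hp, Ideal.mem_span_singleton] at hrP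
    obtain ⟨s, hs⟩ := hrP
    have hps : p * 1 = p * (q * s) := by rw [mul_one]; nth_rewrite 1 [hr, hs]; ring
    have h1 : (1 : S) = q * s := mul_left_cancel₀ hp0 hps
    rw [hq]
    exact Ideal.eq_top_of_isUnit_mem _ (Ideal.mem_span_singleton_self q)
      (IsUnit.of_mul_eq_one (a := q) s h1.symm)
end
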